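/- arXiv:2406.10364 — 3 statements merged into one kernel-verified Lean document; each statement's English description precedes it below -/
import Mathlib

section
/- Under the above setup, log ‖S_n‖ = Σ_{j=1}^{n-1} log |a_j + b_{j+1} c_j / a_{j+1}| + log ‖ [[a_n, (b_1/a_1) a_n],[c_n, (b_1/a_1) c_n]] ‖ whenever all factors a_j + b_{j+1} c_j / a_{j+1} are nonzero. -/
open MeasureTheory Real

noncomputable def hsNorm (M : Matrix (Fin 2) (Fin 2) ℝ) : ℝ :=
  Real.sqrt (∑ i, ∑ j, (M i j) ^ 2)

noncomputable def Ymat (a b c : ℝ) : Matrix (Fin 2) (Fin 2) ℝ := !![a, b; c, b * c / a]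

noncomputable def Sprod (Y : ℕ → Matrix (Fin 2) (Fin 2) ℝ) : ℕ → Matrix (Fin 2) (Fin 2) ℝ
  | 0 => 1
  | n + 1 => Y n * Sprod Y n

lemma hsNorm_smul (r : ℝ) (M : Matrix (Fin 2) (Fin 2) ℝ) :
    hsNorm (r • M) = |r| * hsNorm M := by
  unfold hsNorm
  have h : (∑ i, ∑ j, ((r • M) i j) ^ 2) = r ^ 2 * ∑ i, ∑ j, (M i j) ^ 2 := by
    simp [Matrix.smul_apply, Finset.mul_sum, mul_pow]; ring
  rw [h, Real.sqrt_mul (sq_nonneg r), Real.sqrt_sq_eq_abs]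

lemma Sprod_eq (a b c : ℕ → ℝ) (ha : ∀ j, a j ≠ 0) (n : ℕ) (hn : 1 ≤ n) :
    Sprod (fun j => Ymat (a j) (b j) (c j)) n =
      (∏ j ∈ Finset.range (n - 1), (a j + b (j + 1) * c j / a (j + 1))) •
        !![a (n - 1), (b 0 / a 0) * a (n - 1); c (n - 1), (b 0 / a 0) * c (n - 1)] := by
  induction n with
  | zero => omega
  | succ m ih =>
    rcases Nat.eq_zero_or_pos m with h0 | hm
    · subst h0
      show Ymat (a 0) (b 0) (c 0) * 1 = _
      simp only [Nat.add_sub_cancel, Finset.range_zero, Finset.prod_empty, one_smul, mul_one]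
      have h0 := ha 0
      ext i j
      fin_cases i <;> fin_cases j <;> simp [Ymat] <;> field_simp
    · have hms : m - 1 + 1 = m := by omega
      show Ymat (a m) (b m) (c m) * Sprod _ m = _
      rw [ih hm, Matrix.mul_smul]
      have hprod : (∏ j ∈ Finset.range (m + 1 - 1), (a j + b (j + 1) * c j / a (j + 1)))
          = (∏ j ∈ Finset.range (m - 1), (a j + b (j + 1) * c j / a (j + 1))) *
            (a (m - 1) + b m * c (m - 1) / a m) := by
        rw [Nat.add_sub_cancel, ← hms, Finset.prod_range_succ, hms]
      rw [hprod, mul_smul]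
      congr 1
      have hkey : Ymat (a m) (b m) (c m) *
          !![a (m - 1), b 0 / a 0 * a (m - 1); c (m - 1), b 0 / a 0 * c (m - 1)] =
          (a (m - 1) + b m * c (m - 1) / a m) •
            !![a m, b 0 / a 0 * a m; c m, b 0 / a 0 * c m] := by
        have ham := ha m
        have h0 := ha 0
        ext i j
        fin_cases i <;> fin_cases j <;>
          simp [Ymat, Matrix.mul_apply, Fin.sum_univ_two] <;> field_simp <;> ring
      simpa [Nat.add_sub_cancel] using hkey

/-- `log ‖S_n‖ = Σ_{j=1}^{n-1} log |a_j + b_{j+1} c_j / a_{j+1}| + log ‖M_n‖`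
(0-based indexing), provided all factors are nonzero. -/
theorem log_norm_decomposition (a b c : ℕ → ℝ) (ha : ∀ j, a j ≠ 0) (n : ℕ) (hn : 1 ≤ n)
    (hfac : ∀ j < n - 1, a j + b (j + 1) * c j / a (j + 1) ≠ 0) :
    Real.log (hsNorm (Sprod (fun j => Ymat (a j) (b j) (c j)) n)) =
      (∑ j ∈ Finset.range (n - 1), Real.log |a j + b (j + 1) * c j / a (j + 1)|) +
        Real.log (hsNorm
          !![a (n - 1), (b 0 / a 0) * a (n - 1); c (n - 1), (b 0 / a 0) * c (n - 1)]) := by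
  rw [Sprod_eq a b c ha n hn, hsNorm_smul]
  set P := ∏ j ∈ Finset.range (n - 1), (a j + b (j + 1) * c j / a (j + 1)) with hP
  have hPne : P ≠ 0 := by
    rw [hP]
    exact Finset.prod_ne_zero_iff.mpr fun j hj => hfac j (Finset.mem_range.mp hj)
  have hNpos : 0 < hsNorm
      !![a (n - 1), b 0 / a 0 * a (n - 1); c (n - 1), b 0 / a 0 * c (n - 1)] := by
    unfold hsNorm
    apply Real.sqrt_pos.mpr
    have h1 := ha (n - 1)
    simp [Fin.sum_univ_two]
    positivity
  rw [Real.log_mul (abs_ne_zero.mpr hPne) (ne_of_gt hNpos)]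
  congr 1
  rw [hP, Finset.abs_prod, Real.log_prod]
  intro j hj
  exact abs_ne_zero.mpr (hfac j (Finset.mem_range.mp hj))
end

section
/- If x, y are independent random variables each uniform on [0, b] with b > 0, then E[log|x + y|] = 2 log 2 − 3/2 + log b and Var(log|x + y|) = 5/4 − 2(log 2)². -/
open MeasureTheory ProbabilityTheory Real Set intervalIntegral

noncomputable def F1 (t : ℝ) : ℝ := t * Real.log t - t
noncomputable def F2 (t : ℝ) : ℝ := t * (Real.log t)^2 - 2*(t*Real.log t) + 2*t
noncomputable def G1 (t : ℝ) : ℝ := t/2*(t*Real.log t) - 3/4*t^2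
noncomputable def G2 (t : ℝ) : ℝ := (t*Real.log t)^2/2 - 3/2*(t*(t*Real.log t)) + 7/4*t^2

lemma contF1 : Continuous F1 := Real.continuous_mul_log.sub continuous_id

lemma contG1 : Continuous G1 :=
  ((continuous_id.div_const 2).mul Real.continuous_mul_log).sub
    (continuous_const.mul (continuous_pow 2) : Continuous fun t:ℝ => (3/4)*t^2)

lemma contG2 : Continuous G2 :=
  (((Real.continuous_mul_log.pow 2).div_const 2).sub
    (continuous_const.mul (continuous_id.mul Real.continuous_mul_log) : Continuous fun t:ℝ => (3/2)*(t*(t*Real.log t)))).add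
    (continuous_const.mul (continuous_pow 2) : Continuous fun t:ℝ => (7/4)*t^2)

lemma contOnF2 : ContinuousOn F2 (Ici 0) := by
  have hc : Continuous fun t : ℝ => (2*(Real.sqrt t * Real.log (Real.sqrt t)))^2
      - 2*(t*Real.log t) + 2*t :=
    ((continuous_const.mul (Real.continuous_mul_log.comp Real.continuous_sqrt)).pow 2).sub
      (continuous_const.mul Real.continuous_mul_log) |>.add (continuous_const.mul continuous_id)
  refine ContinuousOn.congr hc.continuousOn fun t ht => ?_
  have ht : (0:ℝ) ≤ t := ht
  rw [Real.log_sqrt ht]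
  have h1 : (2*(Real.sqrt t * (Real.log t/2)))^2 = (Real.sqrt t)^2 * (Real.log t)^2 := by ring
  rw [F2, h1, Real.sq_sqrt ht]

lemma hasDerivAt_G1 {t : ℝ} (ht : t ≠ 0) : HasDerivAt G1 (F1 t) t := by
  have h := (((hasDerivAt_id t).div_const 2).mul (Real.hasDerivAt_mul_log ht)).sub
    ((hasDerivAt_pow 2 t).const_mul (3/4 : ℝ))
  refine h.congr_deriv ?_
  simp [F1]
  ring

lemma hasDerivAt_G2 {t : ℝ} (ht : t ≠ 0) : HasDerivAt G2 (F2 t) t := by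
  have h := ((((Real.hasDerivAt_mul_log ht).pow 2).div_const 2).sub
    (((hasDerivAt_id t).mul (Real.hasDerivAt_mul_log ht)).const_mul (3/2))).add
    ((hasDerivAt_pow 2 t).const_mul (7/4))
  refine h.congr_deriv ?_
  simp [F2]
  ring

lemma integral_log_sq {a c : ℝ} (ha : 0 < a) (hac : a ≤ c) :
    ∫ t in a..c, (Real.log t)^2 = F2 c - F2 a := by
  have hsub : uIcc a c ⊆ {(0:ℝ)}ᶜ := fun t ht => by
    rw [uIcc_of_le hac] at ht
    exact fun h => absurd (h ▸ ht.1) (not_le.2 ha)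
  apply intervalIntegral.integral_eq_sub_of_hasDerivAt (f := F2)
  · intro t ht
    have ht0 : 0 < t := lt_of_lt_of_le ha (by rw [uIcc_of_le hac] at ht; exact ht.1)
    have h := (((hasDerivAt_id t).mul ((Real.hasDerivAt_log ht0.ne').pow 2)).sub
      ((Real.hasDerivAt_mul_log ht0.ne').const_mul 2)).add ((hasDerivAt_id t).const_mul 2)
    refine h.congr_deriv ?_
    simp only [Pi.pow_apply, id_eq, Nat.cast_ofNat]
    field_simp
    ring
  · exact ((Real.continuousOn_log.mono hsub).pow 2).intervalIntegrable

lemma inner1 {u b : ℝ} (hu : 0 < u) (hb : 0 < b) :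
    ∫ v in (0:ℝ)..b, Real.log (u+v) = F1 (b+u) - F1 u := by
  have h : (fun v => Real.log (u+v)) = fun v => Real.log (v+u) := by
    funext v; rw [add_comm]
  rw [h, intervalIntegral.integral_comp_add_right (fun t => Real.log t) u]
  rw [integral_log]
  simp only [zero_add, F1]
  ring

lemma inner2 {u b : ℝ} (hu : 0 < u) (hb : 0 < b) :
    ∫ v in (0:ℝ)..b, (Real.log (u+v))^2 = F2 (b+u) - F2 u := by
  have h : (fun v => (Real.log (u+v))^2) = fun v => (Real.log (v+u))^2 := by
    funext v; rw [add_comm]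
  rw [h, intervalIntegral.integral_comp_add_right (fun t => (Real.log t)^2) u]
  rw [zero_add, integral_log_sq hu (by linarith)]

lemma outer1 {b : ℝ} (hb : 0 < b) :
    ∫ u in (0:ℝ)..b, (F1 (b+u) - F1 u) = (G1 (b+b) - G1 b) - (G1 (b+0) - G1 0) := by
  apply intervalIntegral.integral_eq_sub_of_hasDerivAt_of_le hb.le
    (f := fun u => G1 (b+u) - G1 u)
  · exact ((contG1.comp (continuous_const.add continuous_id)).sub contG1).continuousOn
  · intro u hu
    have h1 : HasDerivAt (fun u : ℝ => G1 (b+u)) (F1 (b+u)) u := by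
      have := (hasDerivAt_G1 (by rw [Set.mem_Ioo] at hu; nlinarith : b+u ≠ 0)).comp u ((hasDerivAt_id u).const_add b)
      simpa [Function.comp_def] using this
    exact h1.sub (hasDerivAt_G1 (ne_of_gt hu.1))
  · exact ((contF1.comp (continuous_const.add continuous_id)).sub contF1).intervalIntegrable _ _

lemma outer2 {b : ℝ} (hb : 0 < b) :
    ∫ u in (0:ℝ)..b, (F2 (b+u) - F2 u) = (G2 (b+b) - G2 b) - (G2 (b+0) - G2 0) := by
  apply intervalIntegral.integral_eq_sub_of_hasDerivAt_of_le hb.le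
    (f := fun u => G2 (b+u) - G2 u)
  · exact ((contG2.comp (continuous_const.add continuous_id)).sub contG2).continuousOn
  · intro u hu
    have h1 : HasDerivAt (fun u : ℝ => G2 (b+u)) (F2 (b+u)) u := by
      have := (hasDerivAt_G2 (by rw [Set.mem_Ioo] at hu; nlinarith : b+u ≠ 0)).comp u ((hasDerivAt_id u).const_add b)
      simpa [Function.comp_def] using this
    exact h1.sub (hasDerivAt_G2 (ne_of_gt hu.1))
  · apply ContinuousOn.intervalIntegrable
    apply ContinuousOn.sub
    · apply contOnF2.comp (continuous_const.add continuous_id).continuousOn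
      intro u hu
      rw [uIcc_of_le hb.le] at hu
      exact add_nonneg hb.le hu.1
    · exact contOnF2.mono (by rw [uIcc_of_le hb.le]; exact fun u hu => hu.1)

lemma abs_log_le {t : ℝ} (ht : 0 < t) {e : ℝ} (he : 0 < e) :
    |Real.log t| ≤ t ^ e / e + t ^ (-e) / e := by
  have h1 : Real.log t ≤ t ^ e / e := Real.log_le_rpow_div ht.le he
  have h2 : -Real.log t ≤ t ^ (-e) / e := by
    have := Real.log_le_rpow_div (x := t⁻¹) (by positivity) he
    rwa [Real.log_inv, Real.inv_rpow ht.le, ← Real.rpow_neg ht.le] at this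
  have h3 : (0:ℝ) ≤ t ^ e / e := by positivity
  have h4 : (0:ℝ) ≤ t ^ (-e) / e := by positivity
  rw [abs_le]; constructor <;> linarith

lemma integrableOn_log_Icc {b : ℝ} (hb : 0 < b) :
    IntegrableOn Real.log (Icc 0 b) volume := by
  rw [integrableOn_Icc_iff_integrableOn_Ioc]
  have hg : IntegrableOn (fun t : ℝ => t ^ ((1:ℝ)/2) / (1/2) + t ^ (-(1:ℝ)/2) / (1/2))
      (Ioc 0 b) volume := by
    apply Integrable.add
    · exact ((intervalIntegrable_rpow' (by norm_num)).1).div_const _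
    · exact ((intervalIntegrable_rpow' (by norm_num)).1).div_const _
  refine Integrable.mono' hg Real.measurable_log.aestronglyMeasurable ?_
  filter_upwards [ae_restrict_mem measurableSet_Ioc] with t ht
  rw [Real.norm_eq_abs]
  have := abs_log_le ht.1 (by norm_num : (0:ℝ) < 1/2)
  simpa [neg_div] using this

lemma integrableOn_log_sq_Icc {b : ℝ} (hb : 0 < b) :
    IntegrableOn (fun t => (Real.log t)^2) (Icc 0 b) volume := by
  rw [integrableOn_Icc_iff_integrableOn_Ioc]
  have hg : IntegrableOn (fun t : ℝ => 16 * t ^ ((1:ℝ)/2) + 32 + 16 * t ^ (-(1:ℝ)/2))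
      (Ioc 0 b) volume := by
    apply Integrable.add
    apply Integrable.add
    · exact ((intervalIntegrable_rpow' (by norm_num)).1).const_mul _
    · exact integrableOn_const measure_Ioc_lt_top.ne
    · exact ((intervalIntegrable_rpow' (by norm_num)).1).const_mul _
  refine Integrable.mono' hg (Real.measurable_log.pow_const 2).aestronglyMeasurable ?_
  filter_upwards [ae_restrict_mem measurableSet_Ioc] with t ht
  have h1 : |Real.log t| ≤ t ^ ((1:ℝ)/4) / (1/4) + t ^ (-(1:ℝ)/4) / (1/4) := by
    simpa [neg_div] using abs_log_le ht.1 (by norm_num : (0:ℝ) < 1/4)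
  have hq : t ^ ((1:ℝ)/4) / (1/4) + t ^ (-(1:ℝ)/4) / (1/4)
      = 4 * t ^ ((1:ℝ)/4) + 4 * t ^ (-(1:ℝ)/4) := by ring
  rw [hq] at h1
  have hA : (0:ℝ) < t ^ ((1:ℝ)/4) := Real.rpow_pos_of_pos ht.1 _
  have hB : (0:ℝ) < t ^ (-(1:ℝ)/4) := Real.rpow_pos_of_pos ht.1 _
  have hsq : (Real.log t)^2 ≤ (4 * t ^ ((1:ℝ)/4) + 4 * t ^ (-(1:ℝ)/4))^2 := by
    calc (Real.log t)^2 = |Real.log t|^2 := (sq_abs _).symm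
    _ ≤ (4 * t ^ ((1:ℝ)/4) + 4 * t ^ (-(1:ℝ)/4))^2 :=
        pow_le_pow_left₀ (abs_nonneg _) h1 2
  have hAB : t ^ ((1:ℝ)/4) * t ^ (-(1:ℝ)/4) = 1 := by
    rw [← Real.rpow_add ht.1]; norm_num
  have hA2 : (t ^ ((1:ℝ)/4))^2 = t ^ ((1:ℝ)/2) := by
    rw [← Real.rpow_natCast (t ^ ((1:ℝ)/4)) 2, ← Real.rpow_mul ht.1.le]; norm_num
  have hB2 : (t ^ (-(1:ℝ)/4))^2 = t ^ (-(1:ℝ)/2) := by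
    rw [← Real.rpow_natCast (t ^ (-(1:ℝ)/4)) 2, ← Real.rpow_mul ht.1.le]; norm_num
  have hexp : (4 * t ^ ((1:ℝ)/4) + 4 * t ^ (-(1:ℝ)/4))^2
      = 16 * t ^ ((1:ℝ)/2) + 32 + 16 * t ^ (-(1:ℝ)/2) := by
    have : (4 * t ^ ((1:ℝ)/4) + 4 * t ^ (-(1:ℝ)/4))^2
        = 16 * (t ^ ((1:ℝ)/4))^2 + 32 * (t ^ ((1:ℝ)/4) * t ^ (-(1:ℝ)/4))
          + 16 * (t ^ (-(1:ℝ)/4))^2 := by ring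
    rw [this, hA2, hB2, hAB]; ring
  rw [Real.norm_eq_abs, abs_of_nonneg (sq_nonneg _)]
  rw [hexp] at hsq
  exact hsq

section Prod

variable {b : ℝ}

lemma rho_finite (hb : 0 < b) : IsFiniteMeasure (volume.restrict (Icc (0:ℝ) b)) := by
  constructor
  rw [Measure.restrict_apply_univ, Real.volume_Icc]
  exact ENNReal.ofReal_lt_top

lemma ae_facts (hb : 0 < b) :
    ∀ᵐ p ∂((volume.restrict (Icc (0:ℝ) b)).prod (volume.restrict (Icc (0:ℝ) b))),
      0 < p.1 ∧ p.1 ≤ b ∧ 0 ≤ p.2 ∧ p.2 ≤ b := by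
  have hmem : ∀ᵐ p ∂((volume.restrict (Icc (0:ℝ) b)).prod (volume.restrict (Icc (0:ℝ) b))),
      p ∈ (Icc (0:ℝ) b) ×ˢ (Icc (0:ℝ) b) := by
    rw [Measure.prod_restrict]
    exact ae_restrict_mem (measurableSet_Icc.prod measurableSet_Icc)
  have hne : ∀ᵐ p ∂((volume.restrict (Icc (0:ℝ) b)).prod (volume.restrict (Icc (0:ℝ) b))),
      p.1 ≠ 0 := by
    refine ae_iff.2 ?_
    have hset : {p : ℝ × ℝ | ¬ p.1 ≠ 0} = ({0} : Set ℝ) ×ˢ (univ : Set ℝ) := by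
      ext ⟨a, c⟩; simp [eq_comm]
    rw [hset, Measure.prod_prod]
    have h0 : (volume.restrict (Icc (0:ℝ) b)) ({0} : Set ℝ) = 0 := by
      rw [Measure.restrict_apply (measurableSet_singleton 0)]
      exact measure_mono_null Set.inter_subset_left Real.volume_singleton
    rw [h0, zero_mul]
  filter_upwards [hmem, hne] with p hp hp0
  obtain ⟨⟨h1, h2⟩, h3, h4⟩ := hp
  exact ⟨lt_of_le_of_ne h1 (Ne.symm hp0), h2, h3, h4⟩

lemma abs_log_sum_bound (hb : 0 < b) {u v : ℝ} (hu : 0 < u) (hub : u ≤ b)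
    (hv : 0 ≤ v) (hvb : v ≤ b) :
    |Real.log (|u + v|)| ≤ |Real.log u| + |Real.log (2*b)| := by
  have ht : 0 < u + v := by linarith
  rw [abs_of_pos ht]
  have h1 : Real.log (u+v) ≤ Real.log (2*b) :=
    Real.log_le_log ht (by linarith)
  have h2 : Real.log u ≤ Real.log (u+v) := Real.log_le_log hu (by linarith)
  have h3 := le_abs_self (Real.log (2*b))
  have h4 := neg_abs_le (Real.log u)
  have h5 := abs_nonneg (Real.log u)
  have h6 := abs_nonneg (Real.log (2*b))
  rw [abs_le]; constructor <;> linarith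

lemma int1 (hb : 0 < b) :
    Integrable (fun p : ℝ × ℝ => Real.log |p.1 + p.2|)
      ((volume.restrict (Icc (0:ℝ) b)).prod (volume.restrict (Icc (0:ℝ) b))) := by
  haveI := rho_finite hb
  have hlog : Integrable (fun t => |Real.log t|) (volume.restrict (Icc (0:ℝ) b)) :=
    (integrableOn_log_Icc hb).abs
  have hg : Integrable (fun p : ℝ × ℝ => |Real.log p.1| + |Real.log (2*b)|)
      ((volume.restrict (Icc (0:ℝ) b)).prod (volume.restrict (Icc (0:ℝ) b))) := by
    have h1 := hlog.mul_prod (integrable_const (1:ℝ) (μ := volume.restrict (Icc (0:ℝ) b)))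
    simp only [mul_one] at h1
    exact h1.add (integrable_const _)
  refine Integrable.mono' hg
    ((Real.measurable_log.comp (measurable_fst.add measurable_snd).abs).aestronglyMeasurable) ?_
  filter_upwards [ae_facts hb] with p hp
  rw [Real.norm_eq_abs]
  exact abs_log_sum_bound hb hp.1 hp.2.1 hp.2.2.1 hp.2.2.2

lemma int2 (hb : 0 < b) :
    Integrable (fun p : ℝ × ℝ => (Real.log |p.1 + p.2|)^2)
      ((volume.restrict (Icc (0:ℝ) b)).prod (volume.restrict (Icc (0:ℝ) b))) := by
  haveI := rho_finite hb
  have hlog : Integrable (fun t => |Real.log t|) (volume.restrict (Icc (0:ℝ) b)) :=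
    (integrableOn_log_Icc hb).abs
  have hlogsq : Integrable (fun t => (Real.log t)^2) (volume.restrict (Icc (0:ℝ) b)) :=
    integrableOn_log_sq_Icc hb
  have hg : Integrable (fun p : ℝ × ℝ =>
      (Real.log p.1)^2 + (2*|Real.log (2*b)|) * |Real.log p.1| + |Real.log (2*b)|^2)
      ((volume.restrict (Icc (0:ℝ) b)).prod (volume.restrict (Icc (0:ℝ) b))) := by
    have h1 := hlogsq.mul_prod (integrable_const (1:ℝ) (μ := volume.restrict (Icc (0:ℝ) b)))
    simp only [mul_one] at h1
    have h2 := (hlog.const_mul (2*|Real.log (2*b)|)).mul_prod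
      (integrable_const (1:ℝ) (μ := volume.restrict (Icc (0:ℝ) b)))
    simp only [mul_one] at h2
    exact (h1.add h2).add (integrable_const _)
  refine Integrable.mono' hg
    (((Real.measurable_log.comp (measurable_fst.add measurable_snd).abs).pow_const
        2).aestronglyMeasurable) ?_
  filter_upwards [ae_facts hb] with p hp
  have hbd := abs_log_sum_bound hb hp.1 hp.2.1 hp.2.2.1 hp.2.2.2
  rw [Real.norm_eq_abs, abs_of_nonneg (sq_nonneg _)]
  calc (Real.log |p.1 + p.2|)^2 = |Real.log (|p.1 + p.2|)|^2 := (sq_abs _).symm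
  _ ≤ (|Real.log p.1| + |Real.log (2*b)|)^2 := pow_le_pow_left₀ (abs_nonneg _) hbd 2
  _ = (Real.log p.1)^2 + (2*|Real.log (2*b)|) * |Real.log p.1| + |Real.log (2*b)|^2 := by
      rw [add_sq, sq_abs]; ring

end Prod

lemma reduce {Ω : Type*} [MeasurableSpace Ω] (μ : Measure Ω) [IsProbabilityMeasure μ]
    {b : ℝ} (hb : 0 < b) (x y : Ω → ℝ)
    (hx : pdf.IsUniform x (Set.Icc 0 b) μ volume)
    (hy : pdf.IsUniform y (Set.Icc 0 b) μ volume)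
    (hindep : IndepFun x y μ) (f : ℝ → ℝ) (hfm : Measurable f)
    (hfint : Integrable (fun p : ℝ × ℝ => f (p.1 + p.2))
      ((volume.restrict (Icc (0:ℝ) b)).prod (volume.restrict (Icc (0:ℝ) b)))) :
    ∫ ω, f (x ω + y ω) ∂μ
      = b⁻¹ * (b⁻¹ * ∫ u in Icc (0:ℝ) b, ∫ v in Icc (0:ℝ) b, f (u + v)) := by
  have hvol : volume (Icc (0:ℝ) b) = ENNReal.ofReal b := by rw [Real.volume_Icc, sub_zero]
  have hne0 : volume (Icc (0:ℝ) b) ≠ 0 := by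
    rw [hvol]; exact (ENNReal.ofReal_pos.2 hb).ne'
  have hnetop : volume (Icc (0:ℝ) b) ≠ ⊤ := by rw [hvol]; exact ENNReal.ofReal_ne_top
  have hxm := hx.aemeasurable hne0 hnetop
  have hym := hy.aemeasurable hne0 hnetop
  have hx' : μ.map x = (ENNReal.ofReal b)⁻¹ • volume.restrict (Icc (0:ℝ) b) := by
    have h := hx
    unfold MeasureTheory.pdf.IsUniform at h
    unfold ProbabilityTheory.cond at h
    rwa [hvol] at h
  have hy' : μ.map y = (ENNReal.ofReal b)⁻¹ • volume.restrict (Icc (0:ℝ) b) := by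
    have h := hy
    unfold MeasureTheory.pdf.IsUniform at h
    unfold ProbabilityTheory.cond at h
    rwa [hvol] at h
  have hmap : μ.map (fun ω => (x ω, y ω))
      = ((ENNReal.ofReal b)⁻¹ • volume.restrict (Icc (0:ℝ) b)).prod
        ((ENNReal.ofReal b)⁻¹ • volume.restrict (Icc (0:ℝ) b)) := by
    rw [(indepFun_iff_map_prod_eq_prod_map_map hxm hym).mp hindep, hx', hy']
  have hprod : ((ENNReal.ofReal b)⁻¹ • volume.restrict (Icc (0:ℝ) b)).prod
        ((ENNReal.ofReal b)⁻¹ • volume.restrict (Icc (0:ℝ) b))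
      = ((ENNReal.ofReal b)⁻¹ * (ENNReal.ofReal b)⁻¹) •
        ((volume.restrict (Icc (0:ℝ) b)).prod (volume.restrict (Icc (0:ℝ) b))) := by
    haveI : IsFiniteMeasure ((ENNReal.ofReal b)⁻¹ • volume.restrict (Icc (0:ℝ) b)) := by
      constructor
      rw [Measure.smul_apply, Measure.restrict_apply_univ, Real.volume_Icc, sub_zero,
        smul_eq_mul]
      exact ENNReal.mul_lt_top (ENNReal.inv_lt_top.2 (ENNReal.ofReal_pos.2 hb))
        ENNReal.ofReal_lt_top
    refine Measure.prod_eq fun s t hs ht => ?_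
    rw [Measure.smul_apply, Measure.smul_apply, Measure.smul_apply, Measure.prod_prod,
      smul_eq_mul, smul_eq_mul, smul_eq_mul, mul_mul_mul_comm]
  have htr : ((ENNReal.ofReal b)⁻¹ * (ENNReal.ofReal b)⁻¹).toReal = b⁻¹ * b⁻¹ := by
    rw [ENNReal.toReal_mul, ENNReal.toReal_inv, ENNReal.toReal_ofReal hb.le]
  calc ∫ ω, f (x ω + y ω) ∂μ
      = ∫ p : ℝ × ℝ, f (p.1 + p.2) ∂(μ.map (fun ω => (x ω, y ω))) :=
        (integral_map (hxm.prodMk hym)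
          ((hfm.comp (measurable_fst.add measurable_snd)).aestronglyMeasurable)).symm
    _ = b⁻¹ * (b⁻¹ * ∫ u in Icc (0:ℝ) b, ∫ v in Icc (0:ℝ) b, f (u + v)) := by
        rw [hmap, hprod, MeasureTheory.integral_smul_measure, htr,
          MeasureTheory.integral_prod _ hfint]
        simp [smul_eq_mul, mul_assoc]

lemma ae_ne_zero {b : ℝ} : ∀ᵐ u ∂(volume.restrict (Icc (0:ℝ) b)), u ≠ 0 := by
  refine ae_iff.2 ?_
  have h : {u : ℝ | ¬ u ≠ 0} = {0} := by ext; simp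
  rw [h, Measure.restrict_apply (measurableSet_singleton 0)]
  exact measure_mono_null Set.inter_subset_left Real.volume_singleton

lemma J1val {b : ℝ} (hb : 0 < b) :
    ∫ u in Icc (0:ℝ) b, ∫ v in Icc (0:ℝ) b, Real.log |u+v|
      = (G1 (b+b) - G1 b) - (G1 (b+0) - G1 0) := by
  have hae : ∀ᵐ u ∂(volume.restrict (Icc (0:ℝ) b)),
      (∫ v in Icc (0:ℝ) b, Real.log |u+v|) = F1 (b+u) - F1 u := by
    filter_upwards [ae_restrict_mem measurableSet_Icc, ae_ne_zero] with u hu hu0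
    have hu' : 0 < u := lt_of_le_of_ne hu.1 (Ne.symm hu0)
    have h1 : (∫ v in Icc (0:ℝ) b, Real.log |u+v|)
        = ∫ v in Icc (0:ℝ) b, Real.log (u+v) :=
      setIntegral_congr_fun measurableSet_Icc
        (fun v hv => by rw [abs_of_pos (by linarith [hv.1] : (0:ℝ) < u + v)])
    rw [h1, integral_Icc_eq_integral_Ioc, ← intervalIntegral.integral_of_le hb.le,
      inner1 hu' hb]
  rw [integral_congr_ae hae, integral_Icc_eq_integral_Ioc,
    ← intervalIntegral.integral_of_le hb.le, outer1 hb]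

lemma J2val {b : ℝ} (hb : 0 < b) :
    ∫ u in Icc (0:ℝ) b, ∫ v in Icc (0:ℝ) b, (Real.log |u+v|)^2
      = (G2 (b+b) - G2 b) - (G2 (b+0) - G2 0) := by
  have hae : ∀ᵐ u ∂(volume.restrict (Icc (0:ℝ) b)),
      (∫ v in Icc (0:ℝ) b, (Real.log |u+v|)^2) = F2 (b+u) - F2 u := by
    filter_upwards [ae_restrict_mem measurableSet_Icc, ae_ne_zero] with u hu hu0
    have hu' : 0 < u := lt_of_le_of_ne hu.1 (Ne.symm hu0)
    have h1 : (∫ v in Icc (0:ℝ) b, (Real.log |u+v|)^2)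
        = ∫ v in Icc (0:ℝ) b, (Real.log (u+v))^2 :=
      setIntegral_congr_fun measurableSet_Icc
        (fun v hv => by rw [abs_of_pos (by linarith [hv.1] : (0:ℝ) < u + v)])
    rw [h1, integral_Icc_eq_integral_Ioc, ← intervalIntegral.integral_of_le hb.le,
      inner2 hu' hb]
  rw [integral_congr_ae hae, integral_Icc_eq_integral_Ioc,
    ← intervalIntegral.integral_of_le hb.le, outer2 hb]

/-- For `x, y` independent uniform on `[0, b]`, `E[log|x+y|] = 2 log 2 − 3/2 + log b` and
`Var(log|x+y|) = 5/4 − 2(log 2)²`. -/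
theorem uniform_example {Ω : Type*} [MeasurableSpace Ω] (μ : Measure Ω)
    [IsProbabilityMeasure μ] (b : ℝ) (hb : 0 < b) (x y : Ω → ℝ)
    (hx : pdf.IsUniform x (Set.Icc 0 b) μ volume)
    (hy : pdf.IsUniform y (Set.Icc 0 b) μ volume)
    (hindep : IndepFun x y μ) :
    (∫ ω, Real.log |x ω + y ω| ∂μ = 2 * Real.log 2 - 3 / 2 + Real.log b) ∧
    ((∫ ω, (Real.log |x ω + y ω|) ^ 2 ∂μ) - (∫ ω, Real.log |x ω + y ω| ∂μ) ^ 2 =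
      5 / 4 - 2 * (Real.log 2) ^ 2) := by
  have hbb : Real.log (b+b) = Real.log 2 + Real.log b := by
    rw [show b+b = (2:ℝ)*b by ring, Real.log_mul two_ne_zero hb.ne']
  have hE1 : ∫ ω, Real.log |x ω + y ω| ∂μ = 2 * Real.log 2 - 3 / 2 + Real.log b := by
    have h : ∫ ω, Real.log |x ω + y ω| ∂μ
        = b⁻¹ * (b⁻¹ * ∫ u in Icc (0:ℝ) b, ∫ v in Icc (0:ℝ) b, Real.log |u + v|) :=
      reduce μ hb x y hx hy hindep (fun t => Real.log |t|)
        (Real.measurable_log.comp measurable_abs) (int1 hb)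
    rw [h, J1val hb]
    simp only [G1, add_zero, Real.log_zero, hbb]
    field_simp
    ring
  have hE2 : ∫ ω, (Real.log |x ω + y ω|)^2 ∂μ
      = (Real.log b)^2 + 4*Real.log 2*Real.log b - 3*Real.log b
        + 2*(Real.log 2)^2 - 6*Real.log 2 + 7/2 := by
    have h : ∫ ω, (Real.log |x ω + y ω|)^2 ∂μ
        = b⁻¹ * (b⁻¹ * ∫ u in Icc (0:ℝ) b, ∫ v in Icc (0:ℝ) b, (Real.log |u + v|)^2) :=
      reduce μ hb x y hx hy hindep (fun t => (Real.log |t|)^2)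
        ((Real.measurable_log.comp measurable_abs).pow_const 2) (int2 hb)
    rw [h, J2val hb]
    simp only [G2, add_zero, Real.log_zero, hbb]
    field_simp
    ring
  refine ⟨hE1, ?_⟩
  rw [hE1, hE2]
  ring
end

section
/- In the binary example with Y_j = [[x_j, 1/x_j],[1, 1/x_j²]] and x_j i.i.d. taking value a with probability p and b with probability 1−p (a, b ∉ {0, −1}, (ab²+1)(a²b+1) ≠ 0), the Lyapunov exponent equals λ = p² log|a + 1/a²| + p(1−p) log(|a + 1/b²|·|b + 1/a²|) + (1−p)² log|b + 1/b²|. -/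
open MeasureTheory ProbabilityTheory Real Filter
open scoped ENNReal

set_option linter.unnecessarySeqFocus false

lemma step_mul (y z w : ℝ) (hy : y ≠ 0) (hw : w ≠ 0) :
    !![y, 1/y; 1, 1/y^2] * !![z, z/w^2; 1, 1/w^2]
      = (z + 1/y^2) • !![y, y/w^2; 1, 1/w^2] := by
  ext i j
  fin_cases i <;> fin_cases j <;>
    simp [Matrix.mul_apply, Fin.sum_univ_two] <;> field_simp <;> ring

lemma sprod_formula (x : ℕ → ℝ) (hx : ∀ j, x j ≠ 0) (n : ℕ) :
    Sprod (fun j => !![x j, 1 / x j; 1, 1 / (x j) ^ 2]) (n + 1)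
      = (∏ k ∈ Finset.range n, (x k + 1 / (x (k+1)) ^ 2)) •
          !![x n, x n / (x 0) ^ 2; 1, 1 / (x 0) ^ 2] := by
  induction n with
  | zero =>
      simp only [Sprod, Finset.range_zero, Finset.prod_empty, one_smul, Matrix.mul_one]
      congr 1
      ext i j
      fin_cases i <;> fin_cases j <;> simp <;> field_simp [hx 0] <;> ring
  | succ n ih =>
      show (fun j => !![x j, 1 / x j; 1, 1 / (x j) ^ 2]) (n+1) *
          Sprod (fun j => !![x j, 1 / x j; 1, 1 / (x j) ^ 2]) (n+1) = _
      rw [ih, Matrix.mul_smul, step_mul _ _ _ (hx (n+1)) (hx 0),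
        Finset.prod_range_succ, smul_smul, mul_comm]

lemma hsNorm_smul_entries (c u v r s : ℝ) :
    hsNorm (c • !![u, v; r, s]) = |c| * Real.sqrt (u^2 + v^2 + r^2 + s^2) := by
  have : (∑ i, ∑ j, ((c • !![u, v; r, s]) i j) ^ 2) = c^2 * (u^2 + v^2 + r^2 + s^2) := by
    simp [Fin.sum_univ_two, mul_pow]
    ring
  rw [hsNorm, this, Real.sqrt_mul (sq_nonneg c), Real.sqrt_sq_eq_abs]

lemma smul_prod' {α β : Type*} [MeasurableSpace α] [MeasurableSpace β]
    (c : ℝ≥0∞) (μ : Measure α) (ν : Measure β) [SFinite μ] [SFinite ν] :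
    (c • μ).prod ν = c • μ.prod ν := by
  ext s hs
  rw [Measure.prod_apply hs, lintegral_smul_measure, Measure.smul_apply,
    Measure.prod_apply hs, smul_eq_mul]

lemma prod_smul' {α β : Type*} [MeasurableSpace α] [MeasurableSpace β]
    (c : ℝ≥0∞) (hc : c ≠ ⊤) (μ : Measure α) (ν : Measure β) [SFinite μ] [SFinite ν] :
    μ.prod (c • ν) = c • μ.prod ν := by
  ext s hs
  rw [Measure.prod_apply hs, Measure.smul_apply, Measure.prod_apply hs, smul_eq_mul,
    ← lintegral_const_mul' c _ hc]
  simp [Measure.smul_apply]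

lemma integrable_smul_dirac {α : Type*} [MeasurableSpace α] [MeasurableSingletonClass α]
    {f : α → ℝ} (hf : Measurable f) {c : ℝ≥0∞} (hc : c ≠ ⊤) (q : α) :
    Integrable f (c • Measure.dirac q) := by
  refine ⟨hf.aestronglyMeasurable, ?_⟩
  rw [HasFiniteIntegral, lintegral_smul_measure, lintegral_dirac]
  exact ENNReal.mul_lt_top hc.lt_top ENNReal.coe_lt_top

lemma expectation_L {Ω : Type*} [MeasurableSpace Ω] (μ : Measure Ω) [IsProbabilityMeasure μ]
    (a b p : ℝ) (hp : 0 ≤ p) (hp1 : p ≤ 1) (f g : Ω → ℝ)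
    (hfm : Measurable f) (hgm : Measurable g) (hindep : IndepFun f g μ)
    (hfd : μ.map f = (ENNReal.ofReal p) • Measure.dirac a +
      (ENNReal.ofReal (1 - p)) • Measure.dirac b)
    (hgd : μ.map g = (ENNReal.ofReal p) • Measure.dirac a +
      (ENNReal.ofReal (1 - p)) • Measure.dirac b)
    (L : ℝ × ℝ → ℝ) (hL : Measurable L) :
    ∫ ω, L (f ω, g ω) ∂μ
      = p * p * L (a, a) + p * (1 - p) * L (a, b)
        + (1 - p) * p * L (b, a) + (1 - p) * (1 - p) * L (b, b) := by
  have hq : (0:ℝ) ≤ 1 - p := by linarith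
  have hmap : μ.map (fun ω => (f ω, g ω)) = (μ.map f).prod (μ.map g) :=
    (indepFun_iff_map_prod_eq_prod_map_map hfm.aemeasurable hgm.aemeasurable).mp hindep
  have h1 : ∫ ω, L (f ω, g ω) ∂μ = ∫ z, L z ∂(μ.map (fun ω => (f ω, g ω))) :=
    (integral_map (hfm.prodMk hgm).aemeasurable hL.aestronglyMeasurable).symm
  rw [h1, hmap, hfd, hgd]
  have hexp : ((ENNReal.ofReal p) • Measure.dirac a +
      (ENNReal.ofReal (1 - p)) • Measure.dirac b).prod
      ((ENNReal.ofReal p) • Measure.dirac a + (ENNReal.ofReal (1 - p)) • Measure.dirac b)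
      = (ENNReal.ofReal p * ENNReal.ofReal p) • Measure.dirac (a, a)
        + (ENNReal.ofReal (1 - p) * ENNReal.ofReal p) • Measure.dirac (a, b)
        + ((ENNReal.ofReal p * ENNReal.ofReal (1 - p)) • Measure.dirac (b, a)
          + (ENNReal.ofReal (1 - p) * ENNReal.ofReal (1 - p)) • Measure.dirac (b, b)) := by
    rw [Measure.add_prod, Measure.prod_add, Measure.prod_add]
    simp only [smul_prod', prod_smul' _ ENNReal.ofReal_ne_top, Measure.dirac_prod_dirac, smul_smul]
  rw [hexp]
  have hP : ENNReal.ofReal p ≠ ⊤ := ENNReal.ofReal_ne_top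
  have hQ : ENNReal.ofReal (1 - p) ≠ ⊤ := ENNReal.ofReal_ne_top
  have I1 : Integrable L ((ENNReal.ofReal p * ENNReal.ofReal p) • Measure.dirac ((a : ℝ), (a : ℝ))) :=
    integrable_smul_dirac hL (ENNReal.mul_ne_top hP hP) _
  have I2 : Integrable L ((ENNReal.ofReal (1 - p) * ENNReal.ofReal p) • Measure.dirac ((a : ℝ), (b : ℝ))) :=
    integrable_smul_dirac hL (ENNReal.mul_ne_top hQ hP) _
  have I3 : Integrable L ((ENNReal.ofReal p * ENNReal.ofReal (1 - p)) • Measure.dirac ((b : ℝ), (a : ℝ))) :=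
    integrable_smul_dirac hL (ENNReal.mul_ne_top hP hQ) _
  have I4 : Integrable L ((ENNReal.ofReal (1 - p) * ENNReal.ofReal (1 - p)) • Measure.dirac ((b : ℝ), (b : ℝ))) :=
    integrable_smul_dirac hL (ENNReal.mul_ne_top hQ hQ) _
  rw [integral_add_measure (I1.add_measure I2) (I3.add_measure I4),
    integral_add_measure I1 I2, integral_add_measure I3 I4]
  simp only [integral_smul_measure, integral_dirac, ENNReal.toReal_mul,
    ENNReal.toReal_ofReal hp, ENNReal.toReal_ofReal hq, smul_eq_mul]
  ring

noncomputable def Lfun (z : ℝ × ℝ) : ℝ := Real.log |z.1 + 1 / z.2 ^ 2|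

noncomputable def Rfun (z : ℝ × ℝ) : ℝ := Real.log ((z.1 ^ 2 + 1) * (1 + 1 / z.2 ^ 4)) / 2

lemma Lfun_measurable : Measurable Lfun := by
  apply Real.measurable_log.comp
  fun_prop

lemma Rfun_measurable : Measurable Rfun := by
  apply Measurable.div_const
  apply Real.measurable_log.comp
  fun_prop

lemma cube_ne (c : ℝ) (hc0 : c ≠ 0) (hc1 : c ≠ -1) : c + 1 / c ^ 2 ≠ 0 := by
  intro h
  have h3 : c ^ 3 + 1 = 0 := by
    field_simp at h
    nlinarith [h]
  have hf : (c + 1) * (c ^ 2 - c + 1) = 0 := by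
    rw [show (c + 1) * (c ^ 2 - c + 1) = c ^ 3 + 1 from by ring, h3]
  rcases mul_eq_zero.mp hf with h' | h'
  · exact hc1 (by linarith)
  · nlinarith [sq_nonneg (2 * c - 1)]

/-- Binary example: `Y_j = [[x_j, 1/x_j],[1, 1/x_j²]]` with `x_j` i.i.d. taking value `a` with
probability `p` and `b` with probability `1 − p`; the Lyapunov exponent equals
`p² log|a + 1/a²| + p(1−p) log(|a + 1/b²|·|b + 1/a²|) + (1−p)² log|b + 1/b²|`. -/
theorem binary_example {Ω : Type*} [MeasurableSpace Ω] (μ : Measure Ω)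
    [IsProbabilityMeasure μ] (a b p : ℝ) (hp : 0 ≤ p) (hp1 : p ≤ 1)
    (ha0 : a ≠ 0) (ha1 : a ≠ -1) (hb0 : b ≠ 0) (hb1 : b ≠ -1)
    (hnd : (a * b ^ 2 + 1) * (a ^ 2 * b + 1) ≠ 0)
    (x : ℕ → Ω → ℝ) (hmx : ∀ j, Measurable (x j))
    (hval : ∀ j ω, x j ω = a ∨ x j ω = b)
    (hiid : iIndepFun x μ)
    (hdist : ∀ j, μ.map (x j) =
      (ENNReal.ofReal p) • Measure.dirac a + (ENNReal.ofReal (1 - p)) • Measure.dirac b) :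
    Tendsto
      (fun n : ℕ =>
        (∫ ω, Real.log (hsNorm (Sprod
          (fun j => !![x j ω, 1 / x j ω; 1, 1 / (x j ω) ^ 2]) n)) ∂μ) / n)
      atTop
      (nhds (p ^ 2 * Real.log |a + 1 / a ^ 2| +
        p * (1 - p) * Real.log (|a + 1 / b ^ 2| * |b + 1 / a ^ 2|) +
        (1 - p) ^ 2 * Real.log |b + 1 / b ^ 2|)) := by
  -- basic nonvanishing facts
  have hab2 : a * b ^ 2 + 1 ≠ 0 := left_ne_zero_of_mul hnd
  have ha2b : a ^ 2 * b + 1 ≠ 0 := right_ne_zero_of_mul hnd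
  have haa : a + 1 / a ^ 2 ≠ 0 := cube_ne a ha0 ha1
  have hbb : b + 1 / b ^ 2 ≠ 0 := cube_ne b hb0 hb1
  have hab : a + 1 / b ^ 2 ≠ 0 := by
    intro h
    apply hab2
    field_simp at h
    nlinarith [h]
  have hba : b + 1 / a ^ 2 ≠ 0 := by
    intro h
    apply ha2b
    field_simp at h
    nlinarith [h]
  have hxne : ∀ j ω, x j ω ≠ 0 := by
    intro j ω; rcases hval j ω with h | h <;> rw [h] <;> assumption
  have hfac : ∀ k ω, x k ω + 1 / (x (k+1) ω) ^ 2 ≠ 0 := by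
    intro k ω
    rcases hval k ω with h1 | h1 <;> rcases hval (k+1) ω with h2 | h2 <;>
      rw [h1, h2] <;> assumption
  -- abbreviation for the limit value
  set lam : ℝ := p * p * Lfun (a, a) + p * (1 - p) * Lfun (a, b)
      + (1 - p) * p * Lfun (b, a) + (1 - p) * (1 - p) * Lfun (b, b) with hlamdef
  have htgt : p ^ 2 * Real.log |a + 1 / a ^ 2| +
      p * (1 - p) * Real.log (|a + 1 / b ^ 2| * |b + 1 / a ^ 2|) +
      (1 - p) ^ 2 * Real.log |b + 1 / b ^ 2| = lam := by
    rw [hlamdef]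
    simp only [Lfun]
    rw [Real.log_mul (abs_ne_zero.mpr hab) (abs_ne_zero.mpr hba)]
    ring
  rw [htgt]
  -- pointwise formula for the log of the norm of the product
  have hpt : ∀ (ω : Ω) (n : ℕ),
      Real.log (hsNorm (Sprod (fun j => !![x j ω, 1 / x j ω; 1, 1 / (x j ω) ^ 2]) (n+1)))
        = (∑ k ∈ Finset.range n, Lfun (x k ω, x (k+1) ω)) + Rfun (x n ω, x 0 ω) := by
    intro ω n
    rw [sprod_formula (fun j => x j ω) (fun j => hxne j ω) n]
    have hc : (∏ k ∈ Finset.range n, (x k ω + 1 / (x (k+1) ω) ^ 2)) ≠ 0 :=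
      Finset.prod_ne_zero_iff.mpr fun k _ => hfac k ω
    have hS : (0:ℝ) < ((x n ω) ^ 2 + 1) * (1 + 1 / (x 0 ω) ^ 4) := by
      have h0 := hxne 0 ω
      positivity
    have he : (x n ω)^2 + (x n ω / (x 0 ω)^2)^2 + 1^2 + (1/(x 0 ω)^2)^2
        = ((x n ω)^2 + 1) * (1 + 1/(x 0 ω)^4) := by
      field_simp
      ring
    rw [hsNorm_smul_entries, he,
      Real.log_mul (abs_ne_zero.mpr hc) (ne_of_gt (Real.sqrt_pos.mpr hS)),
      Real.log_sqrt hS.le, Finset.abs_prod,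
      Real.log_prod (fun k _ => abs_ne_zero.mpr (hfac k ω))]
    simp only [Lfun, Rfun]
  -- integrability
  have hLbnd : ∀ k (ω : Ω), |Lfun (x k ω, x (k+1) ω)|
      ≤ |Lfun (a, a)| + |Lfun (a, b)| + |Lfun (b, a)| + |Lfun (b, b)| := by
    intro k ω
    rcases hval k ω with h1 | h1 <;> rcases hval (k+1) ω with h2 | h2 <;> rw [h1, h2] <;>
      linarith [abs_nonneg (Lfun (a, a)), abs_nonneg (Lfun (a, b)),
        abs_nonneg (Lfun (b, a)), abs_nonneg (Lfun (b, b))]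
  have hRbnd : ∀ n (ω : Ω), |Rfun (x n ω, x 0 ω)|
      ≤ |Rfun (a, a)| + |Rfun (a, b)| + |Rfun (b, a)| + |Rfun (b, b)| := by
    intro n ω
    rcases hval n ω with h1 | h1 <;> rcases hval 0 ω with h2 | h2 <;> rw [h1, h2] <;>
      linarith [abs_nonneg (Rfun (a, a)), abs_nonneg (Rfun (a, b)),
        abs_nonneg (Rfun (b, a)), abs_nonneg (Rfun (b, b))]
  have hLint : ∀ k, Integrable (fun ω => Lfun (x k ω, x (k+1) ω)) μ := by
    intro k
    refine Integrable.mono' (integrable_const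
      (|Lfun (a, a)| + |Lfun (a, b)| + |Lfun (b, a)| + |Lfun (b, b)|))
      ((Lfun_measurable.comp ((hmx k).prodMk (hmx (k+1)))).aestronglyMeasurable)
      (ae_of_all _ fun ω => ?_)
    simpa [Real.norm_eq_abs] using hLbnd k ω
  have hRint : ∀ n, Integrable (fun ω => Rfun (x n ω, x 0 ω)) μ := by
    intro n
    refine Integrable.mono' (integrable_const
      (|Rfun (a, a)| + |Rfun (a, b)| + |Rfun (b, a)| + |Rfun (b, b)|))
      ((Rfun_measurable.comp ((hmx n).prodMk (hmx 0))).aestronglyMeasurable)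
      (ae_of_all _ fun ω => ?_)
    simpa [Real.norm_eq_abs] using hRbnd n ω
  -- expectation of each factor
  have hexp : ∀ k, ∫ ω, Lfun (x k ω, x (k+1) ω) ∂μ = lam := by
    intro k
    rw [hlamdef]
    exact expectation_L μ a b p hp hp1 (x k) (x (k+1)) (hmx k) (hmx (k+1))
      (hiid.indepFun (by omega)) (hdist k) (hdist (k+1)) Lfun Lfun_measurable
  -- the integral formula
  have hF : ∀ n : ℕ,
      (∫ ω, Real.log (hsNorm (Sprod
        (fun j => !![x j ω, 1 / x j ω; 1, 1 / (x j ω) ^ 2]) (n+1))) ∂μ)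
        = n * lam + ∫ ω, Rfun (x n ω, x 0 ω) ∂μ := by
    intro n
    rw [integral_congr_ae (ae_of_all _ fun ω => hpt ω n),
      integral_add (integrable_finset_sum _ fun k _ => hLint k) (hRint n),
      integral_finset_sum _ fun k _ => hLint k]
    congr 1
    rw [Finset.sum_congr rfl fun k _ => hexp k, Finset.sum_const, Finset.card_range,
      nsmul_eq_mul]
  -- bound on the remainder term
  have hrb : ∀ n, |∫ ω, Rfun (x n ω, x 0 ω) ∂μ|
      ≤ |Rfun (a, a)| + |Rfun (a, b)| + |Rfun (b, a)| + |Rfun (b, b)| := by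
    intro n
    have := norm_integral_le_of_norm_le_const (μ := μ)
      (f := fun ω => Rfun (x n ω, x 0 ω))
      (C := |Rfun (a, a)| + |Rfun (a, b)| + |Rfun (b, a)| + |Rfun (b, b)|)
      (ae_of_all _ fun ω => by simpa [Real.norm_eq_abs] using hRbnd n ω)
    simpa [Real.norm_eq_abs, measure_univ] using this
  -- the limit
  rw [← tendsto_add_atTop_iff_nat 1]
  have heq : ∀ n : ℕ,
      (∫ ω, Real.log (hsNorm (Sprod
        (fun j => !![x j ω, 1 / x j ω; 1, 1 / (x j ω) ^ 2]) (n+1))) ∂μ) / ((n+1 : ℕ) : ℝ)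
        = lam * ((n:ℝ) / ((n:ℝ) + 1))
          + (∫ ω, Rfun (x n ω, x 0 ω) ∂μ) * (1 / ((n:ℝ) + 1)) := by
    intro n
    rw [hF n]
    push_cast
    ring
  have t1 : Tendsto (fun n : ℕ => lam * ((n:ℝ) / ((n:ℝ) + 1))) atTop (nhds (lam * 1)) :=
    tendsto_const_nhds.mul (tendsto_natCast_div_add_atTop 1)
  have t2 : Tendsto
      (fun n : ℕ => (∫ ω, Rfun (x n ω, x 0 ω) ∂μ) * (1 / ((n:ℝ) + 1))) atTop (nhds 0) := by
    apply squeeze_zero_norm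
      (a := fun n : ℕ => (|Rfun (a, a)| + |Rfun (a, b)| + |Rfun (b, a)| + |Rfun (b, b)|)
        * (1 / ((n:ℝ) + 1)))
    · intro n
      rw [norm_mul, Real.norm_eq_abs, Real.norm_eq_abs,
        abs_of_nonneg (by positivity : (0:ℝ) ≤ 1 / ((n:ℝ) + 1))]
      exact mul_le_mul_of_nonneg_right (hrb n) (by positivity)
    · simpa using tendsto_one_div_add_atTop_nhds_zero_nat.const_mul
        (|Rfun (a, a)| + |Rfun (a, b)| + |Rfun (b, a)| + |Rfun (b, b)|)
  have hsum := t1.add t2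
  rw [mul_one, add_zero] at hsum
  exact hsum.congr fun n => (heq n).symm
end
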